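/- For every p ∈ (0,1) and every integer a > 0, one has f_p(a, 1) = a − (p − p^a)/(1 − p). -/
import Mathlib


namespace BallsBins

/-- `fp p a b` is the expected number of balls remaining in the two-bin removal process
started from the assignment `(a, b)`, in which at each round bin 1 is selected with
probability `p` and bin 2 with probability `1 - p`:
`fp p (a, 0) = a`, `fp p (0, b) = b`, and
`fp p (a, b) = p · fp p (a-1, b) + (1-p) · fp p (a, b-1)` for `a, b ≥ 1`. -/
noncomputable def fp (p : ℝ) : ℕ → ℕ → ℝ
  | a, 0 => a
  | 0, b => b
  | a + 1, b + 1 => p * fp p a (b + 1) + (1 - p) * fp p (a + 1) b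

/-- For every `p ∈ (0,1)` and every integer `a > 0`,
`fp p (a, 1) = a - (p - p^a) / (1 - p)`. -/
theorem fp_one_formula (p : ℝ) (hp : p ∈ Set.Ioo (0 : ℝ) 1) (a : ℕ) (ha : 0 < a) :
    fp p a 1 = (a : ℝ) - (p - p ^ a) / (1 - p) := by
  have h1 : (1 : ℝ) - p ≠ 0 := by linarith [hp.2]
  induction a with
  | zero => omega
  | succ n ih =>
    rcases Nat.eq_zero_or_pos n with hn | hn
    · subst hn
      simp [fp]
    · rw [show fp p (n + 1) 1 = p * fp p n 1 + (1 - p) * fp p (n + 1) 0 from by conv_lhs => rw [fp],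
        ih hn, show fp p (n + 1) 0 = ((n : ℝ) + 1) from by rw [fp]; push_cast; ring]
      push_cast
      field_simp
      ring
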